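/- Let G be a graph of maximum degree at least 2, H a graph and v ∈ V(H). Then the following are equivalent: (1) γ_I(G∘_v H) = n(G)·(γ_I(H) − 1) + γ_I(G) or γ_I(G∘_v H) = n(G)·(γ_I(H) − 1) + γ(G); (2) γ_I(H − {v}) = γ_I(H) − 1. -/

import Mathlib

open Finset

open scoped Classical

/-- An Italian dominating function on a finite simple graph: values in {0,1,2} and
every vertex with value 0 has neighbour values summing to at least 2. -/
noncomputable def IsIDF {α : Type*} [Fintype α] (G : SimpleGraph α) (f : α → ℕ) : Prop :=
  (∀ u, f u ≤ 2) ∧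
    ∀ u, f u = 0 → 2 ≤ ∑ w ∈ Finset.univ.filter (fun w => G.Adj u w), f w

/-- The Italian domination number γ_I(G). -/
noncomputable def italianNumber {α : Type*} [Fintype α] (G : SimpleGraph α) : ℕ :=
  sInf {n | ∃ f : α → ℕ, IsIDF G f ∧ ∑ u, f u = n}

/-- A γ_I(G)-function: an IDF on G of minimum weight. -/
noncomputable def IsMinIDF {α : Type*} [Fintype α] (G : SimpleGraph α) (f : α → ℕ) : Prop :=
  IsIDF G f ∧ ∑ u, f u = italianNumber G

/-- D is a dominating set of G. -/
def IsDomSet {α : Type*} (G : SimpleGraph α) (D : Set α) : Prop :=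
  ∀ u ∉ D, ∃ w ∈ D, G.Adj u w

/-- The domination number γ(G). -/
noncomputable def dominationNumber {α : Type*} [Fintype α] (G : SimpleGraph α) : ℕ :=
  sInf {n | ∃ D : Finset α, IsDomSet G ↑D ∧ D.card = n}

/-- The degree of a vertex. -/
noncomputable def deg {α : Type*} [Fintype α] (G : SimpleGraph α) (u : α) : ℕ :=
  (Finset.univ.filter (fun w => G.Adj u w)).card

/-- The rooted product G∘_v H: one copy of H for each vertex of G, the root v of the
x-th copy being identified with the vertex x of G. The pair (x, y) is the vertex y of
the x-th copy of H; in particular (x, v) is the vertex x of G. -/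
def rootedProd {α β : Type*} (G : SimpleGraph α) (H : SimpleGraph β) (v : β) :
    SimpleGraph (α × β) where
  Adj p q := (p.1 = q.1 ∧ H.Adj p.2 q.2) ∨ (p.2 = v ∧ q.2 = v ∧ G.Adj p.1 q.1)
  symm := by
    constructor
    rintro ⟨x, y⟩ ⟨x', y'⟩ (⟨h1, h2⟩ | ⟨h1, h2, h3⟩)
    · exact Or.inl ⟨h1.symm, h2.symm⟩
    · exact Or.inr ⟨h2, h1, h3.symm⟩
  loopless := by
    constructor
    rintro ⟨x, y⟩ (⟨_, h⟩ | ⟨_, _, h⟩)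
    · exact H.loopless.irrefl _ h
    · exact G.loopless.irrefl _ h

/-- The weight ω(f_x) of the restriction of f to the copy H_x. -/
def copyWeight {α β : Type*} [Fintype β] (f : α × β → ℕ) (x : α) : ℕ :=
  ∑ y, f (x, y)

/-- The graph H − {v} obtained from H by deleting the vertex v. -/
def deleteVertex {β : Type*} (H : SimpleGraph β) (v : β) : SimpleGraph {w : β // w ≠ v} :=
  SimpleGraph.induce {w : β | w ≠ v} H

/-! Write `n = n(G)`, `I = γ_I(H)`, and `ω(f_x)` for the weight an IDF `f` of `G ∘_v H` puts on
the copy `H_x`. On `H_x` minus its root, `f` satisfies the Italian condition inside `H`. So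
`ω(f_x) ≥ I` unless `f` is `0` at the root and `H_x − root` gets an IDF of `H − v`, and
always `ω(f_x) ≥ I − 1` because `γ_I(H) ≤ γ_I(H − v) + 1`.

If `γ_I(H − v) ≥ I`, every copy weighs at least `I`. Since `γ(G) ≤ γ_I(G) < n`, neither formula
in (1) can then hold. Conversely, if `γ_I(H − v) = I − 1`, the copies of weight `≥ I` dominate
`G`, so `γ_I(G ∘_v H) ≥ n (I − 1) + γ(G)`. Equality holds when `H` has a `γ_I(H)`-function with
value `2` at `v`, or an `IDF` of `H − v` of weight `I − 1` giving the neighbours of `v` weight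
`≥ 1`: place these on the copies over a minimum dominating set of `G`. Otherwise, the capped
excesses `min 2 (ω(f_x) + 1 − I)` form an IDF of `G`, so `γ_I(G ∘_v H) ≥ n (I − 1) + γ_I(G)`.
This bound is attained by putting a `γ_I(G)`-function on the roots and a `γ_I(H − v)`-function
on every copy. -/

section Italian

variable {γ : Type*} [Fintype γ]

noncomputable def nbrSum (G : SimpleGraph γ) (f : γ → ℕ) (u : γ) : ℕ :=
  ∑ w ∈ univ.filter (fun w => G.Adj u w), f w

lemma nbrSum_mono (G : SimpleGraph γ) {f g : γ → ℕ} (hfg : ∀ u, f u ≤ g u) (u : γ) :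
    nbrSum G f u ≤ nbrSum G g u :=
  Finset.sum_le_sum fun w _ => hfg w

lemma sum_update_add (f : γ → ℕ) (a : γ) (c : ℕ) :
    ∑ u, Function.update f a c u + f a = ∑ u, f u + c := by
  rw [Finset.sum_update_of_mem (mem_univ a), ← Finset.add_sum_erase _ _ (mem_univ a),
    Finset.sdiff_singleton_eq_erase]
  ring

lemma exists_isMinIDF (G : SimpleGraph γ) : ∃ f, IsMinIDF G f :=
  Nat.sInf_mem (s := {n | ∃ f : γ → ℕ, IsIDF G f ∧ ∑ u, f u = n})
    ⟨_, fun _ => 2, ⟨fun _ => le_rfl, fun _ h => absurd h two_ne_zero⟩, rfl⟩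

lemma italianNumber_le_sum (G : SimpleGraph γ) {f : γ → ℕ} (hf : IsIDF G f) :
    italianNumber G ≤ ∑ u, f u :=
  Nat.sInf_le ⟨f, hf, rfl⟩

lemma exists_isDomSet_card_eq (G : SimpleGraph γ) :
    ∃ D : Finset γ, IsDomSet G ↑D ∧ D.card = dominationNumber G :=
  Nat.sInf_mem (s := {n | ∃ D : Finset γ, IsDomSet G ↑D ∧ D.card = n})
    ⟨_, univ, fun u hu => absurd (mem_coe.2 (mem_univ u)) hu, rfl⟩

lemma dominationNumber_le_card (G : SimpleGraph γ) {D : Finset γ} (hD : IsDomSet G ↑D) :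
    dominationNumber G ≤ D.card :=
  Nat.sInf_le ⟨D, hD, rfl⟩

lemma one_le_italianNumber [Nonempty γ] (G : SimpleGraph γ) : 1 ≤ italianNumber G := by
  obtain ⟨f, hf, hw⟩ := exists_isMinIDF G
  by_contra! h
  have hzero : ∀ u, f u = 0 := fun u =>
    Finset.sum_eq_zero_iff.1 (hw.trans (Nat.lt_one_iff.1 h)) u (mem_univ u)
  obtain ⟨u⟩ := ‹Nonempty γ›
  have := hf.2 u (hzero u)
  simp [hzero] at this

lemma dominationNumber_le_italianNumber (G : SimpleGraph γ) :
    dominationNumber G ≤ italianNumber G := by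
  obtain ⟨f, hf, hw⟩ := exists_isMinIDF G
  have hsupp : IsDomSet G ↑(univ.filter fun u => f u ≠ 0) := by
    intro u hu
    have h2 := hf.2 u (by simpa using hu)
    obtain ⟨w, hw, hfw⟩ := Finset.exists_ne_zero_of_sum_ne_zero (Nat.ne_zero_of_lt h2)
    exact ⟨w, by simpa using hfw, (mem_filter.1 hw).2⟩
  calc dominationNumber G ≤ (univ.filter fun u => f u ≠ 0).card :=
        dominationNumber_le_card G hsupp
    _ ≤ ∑ u ∈ univ.filter (fun u => f u ≠ 0), f u := by
        simpa using Finset.card_nsmul_le_sum _ f 1 fun u hu =>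
          Nat.one_le_iff_ne_zero.2 (mem_filter.1 hu).2
    _ ≤ ∑ u, f u := Finset.sum_le_sum_of_subset (subset_univ _)
    _ = italianNumber G := hw

lemma italianNumber_lt_card (G : SimpleGraph γ) (hG : ∃ u, 2 ≤ deg G u) :
    italianNumber G < Fintype.card γ := by
  obtain ⟨u₀, hu₀⟩ := hG
  set f := Function.update (fun _ : γ => 1) u₀ 0
  have hf : IsIDF G f := by
    refine ⟨fun u => ?_, fun u hu => ?_⟩
    · by_cases h : u = u₀ <;> simp [f, h]
    · obtain rfl : u = u₀ := by by_contra h; simp [f, h] at hu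
      calc 2 ≤ deg G u := hu₀
        _ = ∑ w ∈ univ.filter (fun w => G.Adj u w), f w := by
          rw [deg, Finset.card_eq_sum_ones]
          refine Finset.sum_congr rfl fun w hw => ?_
          simp [f, Function.update_of_ne (G.ne_of_adj (mem_filter.1 hw).2).symm]
  have hsum : ∑ u, f u + 1 = Fintype.card γ := by
    simpa using sum_update_add (fun _ : γ => 1) u₀ 0
  have := italianNumber_le_sum G hf
  omega

end Italian

section Deletion

variable {β : Type*} [Fintype β]

def IsIDFAwayFrom (H : SimpleGraph β) (v : β) (h : β → ℕ) : Prop :=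
  (∀ u, h u ≤ 2) ∧ ∀ u, u ≠ v → h u = 0 → 2 ≤ nbrSum H h u

variable {H : SimpleGraph β} {v : β} {h : β → ℕ}

lemma IsIDF.isIDFAwayFrom (hh : IsIDF H h) : IsIDFAwayFrom H v h :=
  ⟨hh.1, fun u _ => hh.2 u⟩

lemma IsIDFAwayFrom.isIDF (hh : IsIDFAwayFrom H v h) (hv : h v = 0 → 2 ≤ nbrSum H h v) :
    IsIDF H h :=
  ⟨hh.1, fun u hu => if huv : u = v then huv ▸ hv (huv ▸ hu) else hh.2 u huv hu⟩

lemma IsIDFAwayFrom.update (hh : IsIDFAwayFrom H v h) {c : ℕ} (hc : h v ≤ c) (hc2 : c ≤ 2) :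
    IsIDFAwayFrom H v (Function.update h v c) := by
  have hle : ∀ u, h u ≤ Function.update h v c u := fun u => by
    by_cases huv : u = v
    · subst huv; simpa
    · simp [huv]
  refine ⟨fun u => ?_, fun u huv hu => ?_⟩
  · by_cases huv : u = v
    · subst huv; simpa
    · simpa [huv] using hh.1 u
  · rw [Function.update_of_ne huv] at hu
    exact (hh.2 u huv hu).trans (nbrSum_mono H hle u)

lemma sum_subtype_ne_of_eq_zero (hv : h v = 0) : ∑ b : {w // w ≠ v}, h b = ∑ u, h u := by
  rw [Fintype.sum_eq_add_sum_subtype_ne h v, hv, zero_add]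

lemma nbrSum_deleteVertex (hv : h v = 0) (u : {w // w ≠ v}) :
    nbrSum (deleteVertex H v) (fun b => h b) u = nbrSum H h u := by
  unfold nbrSum
  rw [Finset.sum_filter, Finset.sum_filter, Fintype.sum_eq_add_sum_subtype_ne _ v]
  simp [hv, deleteVertex]

lemma isIDF_deleteVertex_iff (hv : h v = 0) :
    IsIDF (deleteVertex H v) (fun b => h b) ↔ IsIDFAwayFrom H v h := by
  constructor
  · rintro ⟨hle, hdom⟩
    refine ⟨fun u => ?_, fun u huv hu => ?_⟩
    · by_cases huv : u = v
      · simp [huv, hv]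
      · exact hle ⟨u, huv⟩
    · rw [← nbrSum_deleteVertex hv ⟨u, huv⟩]
      exact hdom ⟨u, huv⟩ hu
  · rintro ⟨hle, hdom⟩
    refine ⟨fun b => hle b, fun b hb => ?_⟩
    change 2 ≤ nbrSum _ _ b
    rw [nbrSum_deleteVertex hv b]
    exact hdom b b.2 hb

lemma IsIDFAwayFrom.italianNumber_deleteVertex_le (hh : IsIDFAwayFrom H v h) (hv : h v = 0) :
    italianNumber (deleteVertex H v) ≤ ∑ u, h u :=
  sum_subtype_ne_of_eq_zero hv ▸ italianNumber_le_sum _ ((isIDF_deleteVertex_iff hv).2 hh)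

variable (H v)

lemma exists_isIDFAwayFrom_sum_eq_italianNumber_deleteVertex :
    ∃ h : β → ℕ, h v = 0 ∧ IsIDFAwayFrom H v h ∧
      ∑ u, h u = italianNumber (deleteVertex H v) := by
  obtain ⟨g, hg, hw⟩ := exists_isMinIDF (deleteVertex H v)
  let h : β → ℕ := fun w => if hw : w = v then 0 else g ⟨w, hw⟩
  have hv : h v = 0 := dif_pos rfl
  have hg' : (fun b : {w // w ≠ v} => h b) = g := funext fun b => dif_neg b.2
  refine ⟨h, hv, (isIDF_deleteVertex_iff hv).1 (hg' ▸ hg), ?_⟩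
  rw [← sum_subtype_ne_of_eq_zero hv, hg', hw]

lemma italianNumber_le_italianNumber_deleteVertex_add_one :
    italianNumber H ≤ italianNumber (deleteVertex H v) + 1 := by
  obtain ⟨h, hv, hh, hw⟩ := exists_isIDFAwayFrom_sum_eq_italianNumber_deleteVertex H v
  have hidf : IsIDF H (Function.update h v 1) :=
    (hh.update (by omega) (by omega)).isIDF fun h1 => by simp at h1
  have := sum_update_add h v 1
  have := italianNumber_le_sum H hidf
  omega

variable {H v}

lemma IsIDFAwayFrom.italianNumber_le_sum_add_one (hh : IsIDFAwayFrom H v h) :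
    italianNumber H ≤ ∑ u, h u + 1 := by
  by_cases hv : h v = 0
  · have := hh.italianNumber_deleteVertex_le hv
    have := italianNumber_le_italianNumber_deleteVertex_add_one H v
    omega
  · exact (italianNumber_le_sum H (hh.isIDF fun h0 => absurd h0 hv)).trans (Nat.le_succ _)

end Deletion

section RootedProduct

variable {α β : Type*} [Fintype α] [Fintype β] {G : SimpleGraph α} {H : SimpleGraph β} {v : β}

lemma nbrSum_rootedProd_of_ne (φ : α → β → ℕ) (x : α) {y : β} (hy : y ≠ v) :
    nbrSum (rootedProd G H v) (Function.uncurry φ) (x, y) = nbrSum H (φ x) y := by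
  unfold nbrSum
  rw [Finset.sum_filter, Finset.sum_filter, Fintype.sum_prod_type]
  simp [rootedProd, hy, ite_and]

lemma nbrSum_rootedProd_root (φ : α → β → ℕ) (x : α) :
    nbrSum (rootedProd G H v) (Function.uncurry φ) (x, v)
      = nbrSum H (φ x) v + nbrSum G (fun x' => φ x' v) x := by
  unfold nbrSum
  rw [Finset.sum_filter, Finset.sum_filter, Finset.sum_filter, Fintype.sum_prod_type]
  have hsplit : ∀ x' y', (if (rootedProd G H v).Adj (x, v) (x', y') then φ x' y' else 0)
      = (if x = x' ∧ H.Adj v y' then φ x' y' else 0)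
        + (if y' = v ∧ G.Adj x x' then φ x' y' else 0) := by
    intro x' y'
    have : ¬ (H.Adj v y' ∧ y' = v) := fun ⟨h, hy⟩ => H.loopless.irrefl v (hy ▸ h)
    simp only [rootedProd]
    split_ifs <;> simp_all
  simp [hsplit, Finset.sum_add_distrib, ite_and]

variable (G H v)

lemma isIDF_rootedProd_iff (φ : α → β → ℕ) :
    IsIDF (rootedProd G H v) (Function.uncurry φ) ↔
      ∀ x, IsIDFAwayFrom H v (φ x) ∧
        (φ x v = 0 → 2 ≤ nbrSum H (φ x) v + nbrSum G (fun x' => φ x' v) x) := by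
  constructor
  · intro hf x
    refine ⟨⟨fun y => hf.1 (x, y), fun y hy h0 => ?_⟩, fun h0 => ?_⟩
    · rw [← nbrSum_rootedProd_of_ne φ x hy]
      exact hf.2 (x, y) h0
    · rw [← nbrSum_rootedProd_root]
      exact hf.2 (x, v) h0
  · intro h
    refine ⟨fun p => (h p.1).1.1 p.2, fun ⟨x, y⟩ h0 => ?_⟩
    change 2 ≤ nbrSum _ _ (x, y)
    by_cases hy : y = v
    · subst hy
      rw [nbrSum_rootedProd_root]
      exact (h x).2 h0
    · rw [nbrSum_rootedProd_of_ne φ x hy]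
      exact (h x).1.2 y hy h0

lemma exists_isMinIDF_rootedProd :
    ∃ φ : α → β → ℕ, (∀ x, IsIDFAwayFrom H v (φ x) ∧
        (φ x v = 0 → 2 ≤ nbrSum H (φ x) v + nbrSum G (fun x' => φ x' v) x)) ∧
      ∑ x, ∑ y, φ x y = italianNumber (rootedProd G H v) := by
  obtain ⟨f, hf, hw⟩ := exists_isMinIDF (rootedProd G H v)
  rw [← Function.uncurry_curry f, Fintype.sum_prod_type] at hw
  rw [← Function.uncurry_curry f] at hf
  exact ⟨Function.curry f, (isIDF_rootedProd_iff G H v _).1 hf, hw⟩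

lemma italianNumber_rootedProd_le_sum (φ : α → β → ℕ)
    (hφ : ∀ x, IsIDFAwayFrom H v (φ x) ∧
        (φ x v = 0 → 2 ≤ nbrSum H (φ x) v + nbrSum G (fun x' => φ x' v) x)) :
    italianNumber (rootedProd G H v) ≤ ∑ x, ∑ y, φ x y :=
  Fintype.sum_prod_type (Function.uncurry φ) ▸
    italianNumber_le_sum _ ((isIDF_rootedProd_iff G H v φ).2 hφ)

end RootedProduct

section Bounds

variable {α β : Type*} [Fintype α] [Fintype β] (G : SimpleGraph α) (H : SimpleGraph β) (v : β)

lemma card_mul_add_dominationNumber_le :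
    Fintype.card α * (italianNumber H - 1) + dominationNumber G
      ≤ italianNumber (rootedProd G H v) := by
  obtain ⟨φ, hφ, hw⟩ := exists_isMinIDF_rootedProd G H v
  set B := univ.filter fun x => italianNumber H ≤ ∑ y, φ x y
  have hB : IsDomSet G ↑B := by
    intro x hx
    have hxB : ¬ italianNumber H ≤ ∑ y, φ x y := by simpa [B] using hx
    have h0 : φ x v = 0 := by
      by_contra h
      exact hxB (italianNumber_le_sum H ((hφ x).1.isIDF fun h' => absurd h' h))
    have hint : nbrSum H (φ x) v ≤ 1 := by
      by_contra h
      exact hxB (italianNumber_le_sum H ((hφ x).1.isIDF fun _ => by omega))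
    have hext : nbrSum G (fun x' => φ x' v) x ≠ 0 := by
      have := (hφ x).2 h0
      omega
    obtain ⟨x', hx', hne⟩ := Finset.exists_ne_zero_of_sum_ne_zero hext
    refine ⟨x', ?_, (mem_filter.1 hx').2⟩
    simpa [B] using italianNumber_le_sum H ((hφ x').1.isIDF fun h' => absurd h' hne)
  calc Fintype.card α * (italianNumber H - 1) + dominationNumber G
      ≤ Fintype.card α * (italianNumber H - 1) + B.card := by
        grw [dominationNumber_le_card G hB]
    _ = ∑ x, (italianNumber H - 1 + if x ∈ B then 1 else 0) := by
        simp [sum_add_distrib]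
    _ ≤ ∑ x, ∑ y, φ x y := by
        have : Nonempty β := ⟨v⟩
        have := one_le_italianNumber H
        refine Finset.sum_le_sum fun x _ => ?_
        have := (hφ x).1.italianNumber_le_sum_add_one
        split_ifs with hx
        · have := (mem_filter.1 hx).2
          omega
        · omega
    _ = italianNumber (rootedProd G H v) := hw

lemma card_mul_le_italianNumber_rootedProd
    (hdel : italianNumber H ≤ italianNumber (deleteVertex H v)) :
    Fintype.card α * italianNumber H ≤ italianNumber (rootedProd G H v) := by
  obtain ⟨φ, hφ, hw⟩ := exists_isMinIDF_rootedProd G H v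
  have hcopy : ∀ x, italianNumber H ≤ ∑ y, φ x y := fun x => by
    by_cases h0 : φ x v = 0
    · exact hdel.trans ((hφ x).1.italianNumber_deleteVertex_le h0)
    · exact italianNumber_le_sum H ((hφ x).1.isIDF fun h' => absurd h' h0)
  simpa [← hw] using Finset.sum_le_sum fun x (_ : x ∈ univ) => hcopy x

lemma card_mul_add_italianNumber_le
    (hmin : ∀ h, IsMinIDF H h → h v ≠ 2)
    (hnbr : ∀ h, h v = 0 → IsIDFAwayFrom H v h → ∑ u, h u = italianNumber H - 1 →
      nbrSum H h v = 0) :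
    Fintype.card α * (italianNumber H - 1) + italianNumber G
      ≤ italianNumber (rootedProd G H v) := by
  have : Nonempty β := ⟨v⟩
  have hI := one_le_italianNumber H
  obtain ⟨φ, hφ, hw⟩ := exists_isMinIDF_rootedProd G H v
  have hcopy : ∀ x, italianNumber H ≤ ∑ y, φ x y + 1 := fun x =>
    (hφ x).1.italianNumber_le_sum_add_one
  have hpos : ∀ x, φ x v ≠ 0 → italianNumber H ≤ ∑ y, φ x y := fun x h0 =>
    italianNumber_le_sum H ((hφ x).1.isIDF fun h' => absurd h' h0)
  obtain ⟨c, hc_def⟩ : ∃ c : α → ℕ, ∀ x, c x = min 2 (∑ y, φ x y + 1 - italianNumber H) :=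
    ⟨_, fun _ => rfl⟩
  have hroot : ∀ x, φ x v ≤ c x := by
    intro x
    have := (hφ x).1.1 v
    have := hc_def x
    by_cases h2 : φ x v = 2
    · have : italianNumber H < ∑ y, φ x y := by
        refine lt_of_le_of_ne (hpos x (by omega)) fun heq => hmin (φ x) ?_ h2
        exact ⟨(hφ x).1.isIDF (by omega), heq.symm⟩
      omega
    · by_cases h0 : φ x v = 0
      · omega
      · have := hpos x h0
        omega
  have hc : IsIDF G c := by
    refine ⟨fun x => hc_def x ▸ min_le_left _ _, fun x hx => ?_⟩
    have := hc_def x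
    have hW : ∑ y, φ x y + 1 = italianNumber H := by
      have := hcopy x
      omega
    have h0 : φ x v = 0 := by
      by_contra h
      have := hpos x h
      omega
    have hint := hnbr (φ x) h0 (hφ x).1 (by omega)
    calc 2 ≤ nbrSum G (fun x' => φ x' v) x := by
          have := (hφ x).2 h0
          omega
      _ ≤ nbrSum G c x := nbrSum_mono G hroot x
  calc Fintype.card α * (italianNumber H - 1) + italianNumber G
      ≤ Fintype.card α * (italianNumber H - 1) + ∑ x, c x := by
        grw [italianNumber_le_sum G hc]
    _ = ∑ x, (italianNumber H - 1 + c x) := by simp [sum_add_distrib]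
    _ ≤ ∑ x, ∑ y, φ x y := by
        refine Finset.sum_le_sum fun x _ => ?_
        have := hcopy x
        have := hc_def x
        omega
    _ = italianNumber (rootedProd G H v) := hw

variable {H v}

lemma italianNumber_rootedProd_le_card_mul_add_italianNumber {h : β → ℕ}
    (hh : IsIDFAwayFrom H v h) (hv : h v = 0) :
    italianNumber (rootedProd G H v) ≤ Fintype.card α * ∑ u, h u + italianNumber G := by
  obtain ⟨c, hc, hcw⟩ := exists_isMinIDF G
  calc italianNumber (rootedProd G H v)
      ≤ ∑ x, ∑ y, Function.update h v (c x) y := by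
        refine italianNumber_rootedProd_le_sum G H v _ fun x => ⟨?_, fun h0 => ?_⟩
        · exact hh.update (by omega) (hc.1 x)
        · simp only [Function.update_self] at h0 ⊢
          have := hc.2 x h0
          exact this.trans (Nat.le_add_left _ _)
    _ = ∑ x, (∑ u, h u + c x) := by
        refine Finset.sum_congr rfl fun x _ => ?_
        simpa [hv] using sum_update_add h v (c x)
    _ = Fintype.card α * ∑ u, h u + italianNumber G := by simp [sum_add_distrib, hcw]

lemma italianNumber_rootedProd_le_card_mul_add_dominationNumber {hin hout : β → ℕ}
    (hin_idf : IsIDFAwayFrom H v hin) (hout_idf : IsIDFAwayFrom H v hout)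
    (hin_v : hin v ≠ 0) (hcover : 2 ≤ hin v + nbrSum H hout v)
    (hsum : ∑ u, hin u = ∑ u, hout u + 1) :
    italianNumber (rootedProd G H v) ≤ Fintype.card α * ∑ u, hout u + dominationNumber G := by
  obtain ⟨D, hD, hDcard⟩ := exists_isDomSet_card_eq G
  calc italianNumber (rootedProd G H v)
      ≤ ∑ x, ∑ y, (if x ∈ D then hin else hout) y := by
        refine italianNumber_rootedProd_le_sum G H v _ fun x => ?_
        by_cases hx : x ∈ D
        · simpa [hx] using ⟨hin_idf, fun h0 => absurd h0 hin_v⟩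
        · obtain ⟨d, hdD, hxd⟩ := hD x (by simpa using hx)
          have hd : hin v ≤ nbrSum G (fun x' => (if x' ∈ D then hin else hout) v) x := by
            refine le_of_eq_of_le ?_ (Finset.single_le_sum (fun _ _ => Nat.zero_le _)
              (mem_filter.2 ⟨mem_univ d, hxd⟩))
            simp [show d ∈ D by simpa using hdD]
          simp only [hx, if_false]
          exact ⟨hout_idf, fun _ => by omega⟩
    _ = ∑ x, (∑ u, hout u + if x ∈ D then 1 else 0) := by
        refine Finset.sum_congr rfl fun x _ => ?_
        split_ifs <;> simp [hsum]
    _ = Fintype.card α * ∑ u, hout u + dominationNumber G := by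
        simp [sum_add_distrib, hDcard]

end Bounds

lemma italianNumber_rootedProd_eq_of_italianNumber_deleteVertex_eq {α β : Type*} [Fintype α]
    [Fintype β] (G : SimpleGraph α) {H : SimpleGraph β} {v : β}
    (hdel : italianNumber (deleteVertex H v) = italianNumber H - 1) :
    italianNumber (rootedProd G H v) =
        Fintype.card α * (italianNumber H - 1) + italianNumber G ∨
      italianNumber (rootedProd G H v) =
        Fintype.card α * (italianNumber H - 1) + dominationNumber G := by
  have : Nonempty β := ⟨v⟩
  have hI := one_le_italianNumber H
  obtain ⟨h₀, hv₀, hh₀, hw₀⟩ := exists_isIDFAwayFrom_sum_eq_italianNumber_deleteVertex H v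
  rw [hdel] at hw₀
  have hlow := card_mul_add_dominationNumber_le G H v
  by_cases hmin : ∃ h, IsMinIDF H h ∧ h v = 2
  · obtain ⟨h, ⟨hh, hw⟩, h2⟩ := hmin
    refine .inr (le_antisymm ?_ hlow)
    simpa [hw₀] using italianNumber_rootedProd_le_card_mul_add_dominationNumber G
      hh.isIDFAwayFrom hh₀ (by omega) (by omega) (by omega)
  by_cases hnbr : ∃ h, h v = 0 ∧ IsIDFAwayFrom H v h ∧ ∑ u, h u = italianNumber H - 1 ∧
      nbrSum H h v ≠ 0
  · obtain ⟨h, hv, hh, hw, hnz⟩ := hnbr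
    refine .inr (le_antisymm ?_ hlow)
    have := sum_update_add h v 1
    simpa [hw] using italianNumber_rootedProd_le_card_mul_add_dominationNumber G
      (hh.update (c := 1) (by omega) (by omega)) hh (by simp) (by simp; omega) (by omega)
  push Not at hmin hnbr
  exact .inl (le_antisymm (hw₀ ▸ italianNumber_rootedProd_le_card_mul_add_italianNumber G hh₀ hv₀)
    (card_mul_add_italianNumber_le G H v hmin hnbr))

theorem stmt15_general {α β : Type*} [Fintype α] [Fintype β]
    (G : SimpleGraph α) (hG : ∃ u : α, 2 ≤ deg G u)
    (H : SimpleGraph β) (v : β) :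
    (italianNumber (rootedProd G H v) =
        Fintype.card α * (italianNumber H - 1) + italianNumber G ∨
      italianNumber (rootedProd G H v) =
        Fintype.card α * (italianNumber H - 1) + dominationNumber G) ↔
      italianNumber (deleteVertex H v) = italianNumber H - 1 := by
  refine ⟨fun h1 => ?_, italianNumber_rootedProd_eq_of_italianNumber_deleteVertex_eq G⟩
  have : Nonempty β := ⟨v⟩
  have hI := one_le_italianNumber H
  have hdel := italianNumber_le_italianNumber_deleteVertex_add_one H v
  by_contra hne
  have hlow := card_mul_le_italianNumber_rootedProd G H v (by omega)
  have := italianNumber_lt_card G hG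
  have := dominationNumber_le_italianNumber G
  have hsplit : Fintype.card α * italianNumber H
      = Fintype.card α * (italianNumber H - 1) + Fintype.card α := by
    rw [← Nat.mul_add_one, Nat.sub_add_cancel hI]
  rcases h1 with h | h <;> omega

/-- Theorem: for G of maximum degree at least 2, the following are
equivalent: (1) γ_I(G∘_v H) = n(G)(γ_I(H)−1)+γ_I(G) or γ_I(G∘_v H) = n(G)(γ_I(H)−1)+γ(G);
(2) γ_I(H − {v}) = γ_I(H) − 1. -/
theorem stmt15 {α β : Type*} [Fintype α] [Nonempty α] [Fintype β]
    (G : SimpleGraph α) (hG : ∃ u : α, 2 ≤ deg G u)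
    (H : SimpleGraph β) (v : β) :
    (italianNumber (rootedProd G H v) =
        Fintype.card α * (italianNumber H - 1) + italianNumber G ∨
      italianNumber (rootedProd G H v) =
        Fintype.card α * (italianNumber H - 1) + dominationNumber G) ↔
      italianNumber (deleteVertex H v) = italianNumber H - 1 :=
  stmt15_general G hG H v
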